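/- arXiv:2402.06491 — 2 statements merged into one kernel-verified Lean document; each statement's English description precedes it below -/
import Mathlib

section
/- If q in (0,1) and m \geq 2 satisfy q > (m-1)/m, then the mean number of leaves of a random m-ary branching tree, \langle k \rangle = \sum_k k P(k), where P(k) = q^k (1-q)^{Ne} \frac{1}{mNe+1}\binom{mNe+1}{Ne} with k = (m-1)Ne + 1, equals q / (1 - m(1-q)). -/
/-!
With `x = (1 - q) q^(m-1)` the summand is `q · C(mn, n) xⁿ`. The Fuss–Catalan numbers
`A n r = r / (mn + r) · C(mn + r, n)` obey a Pascal-type recurrence, which yields the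
convolution `A · (r + s) = A · r ⋆ A · s`; hence `B = ∑ A n 1 xⁿ` satisfies `B = 1 + x B^m`.
So does `1/q`, and subcriticality `m (1 - q) < 1` makes `1/q` the only root of `w = 1 + x w^m`
in `[0, 1/q]`, while partial sums show `B ≤ 1/q`; thus `B = 1/q`. The same convolution gives
`C(mn + 1, ·) = A · 1 ⋆ C(m·, ·)`, and `m C(mn, n) = A n 1 + (m - 1) C(mn + 1, n)` turns this
into `m C = B + (m - 1) B C` for `C = ∑ C(mn, n) xⁿ`, i.e. `C = 1 / (1 - m (1 - q))`.
-/

open Finset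

/-- At `n = r = 0` this is the junk value `0 / 0 = 0`, not the conventional `1`. -/
noncomputable def fussCatalan (m n r : ℕ) : ℝ := r / (m * n + r) * (m * n + r).choose n

section FussCatalan

variable {m : ℕ}

lemma fussCatalan_nonneg (m n r : ℕ) : 0 ≤ fussCatalan m n r := by
  unfold fussCatalan; positivity

@[simp] lemma fussCatalan_zero_right (m n : ℕ) : fussCatalan m n 0 = 0 := by
  simp [fussCatalan]

lemma fussCatalan_zero_left (m : ℕ) {r : ℕ} (hr : r ≠ 0) : fussCatalan m 0 r = 1 := by
  simp [fussCatalan, hr]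

lemma fussCatalan_one (m n : ℕ) :
    fussCatalan m n 1 = ((m * n + 1).choose n : ℝ) / (m * n + 1) := by
  simp [fussCatalan, inv_mul_eq_div]

lemma fussCatalan_succ_succ (hm : 0 < m) (n r : ℕ) :
    fussCatalan m (n + 1) (r + 1) = fussCatalan m (n + 1) r + fussCatalan m n (r + m) := by
  have hN₁ : m * (n + 1) + (r + 1) = m * (n + 1) + r + 1 := by omega
  have hN₂ : m * n + (r + m) = m * (n + 1) + r := by ring
  unfold fussCatalan
  rw [hN₁, hN₂]
  set N := m * (n + 1) + r
  have hmul : ((N + 1 : ℕ) : ℝ) * N.choose n = (N + 1).choose (n + 1) * (n + 1) := by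
    exact_mod_cast Nat.add_one_mul_choose_eq N n
  rw [Nat.choose_succ_succ' N n] at hmul ⊢
  have hNpos : (0 : ℝ) < N := by positivity
  have hNr : (N : ℝ) = m * (n + 1) + r := by simp [N]
  push_cast at hmul ⊢
  rw [← hNr, show (m : ℝ) * n + (r + m) = N by rw [hNr]; ring]
  field_simp
  linear_combination ((r + 1) * (N.choose n + N.choose (n + 1)) + m * N.choose n : ℝ) * hNr
    - (m : ℝ) * hmul

theorem fussCatalan_convolution (hm : 0 < m) {f : ℕ → ℕ → ℝ} (hf₀ : ∀ s, f 0 s = 1)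
    (hf : ∀ n s, f (n + 1) (s + 1) = f (n + 1) s + f n (s + m)) (n : ℕ) {r : ℕ} (hr : r ≠ 0)
    (s : ℕ) : f n (r + s) = ∑ k ∈ range (n + 1), fussCatalan m k r * f (n - k) s := by
  induction n using Nat.strong_induction_on generalizing r s with
  | _ n ih =>
  cases n with
  | zero => simp [fussCatalan_zero_left m hr, hf₀]
  | succ n =>
    have shifted : ∀ r, f (n + 1) (r + s) =
        f (n + 1) s + ∑ k ∈ range (n + 1), fussCatalan m (k + 1) r * f (n - k) s := by
      intro r
      induction r with
      | zero => simp
      | succ r ihr =>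
        rw [add_right_comm, hf, ihr, show r + s + m = r + m + s by ring,
          ih n n.lt_succ_self (by omega) s, add_assoc, ← sum_add_distrib]
        congr 1
        refine sum_congr rfl fun k _ => ?_
        rw [fussCatalan_succ_succ hm]
        ring
    rw [shifted, sum_range_succ' _ (n + 1), fussCatalan_zero_left m hr]
    simp [add_comm]

lemma cast_choose_mul_eq (hm : 0 < m) (n : ℕ) :
    ((m * n).choose n : ℝ) = ((m - 1) * n + 1) * fussCatalan m n 1 := by
  have hn : n ≤ m * n := Nat.le_mul_of_pos_left n hm
  have h := Nat.choose_mul_succ_eq (m * n) n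
  rw [Nat.sub_add_comm hn] at h
  have hcast :
      ((m * n).choose n : ℝ) * (m * n + 1) = (m * n + 1).choose n * ((m - 1) * n + 1) := by
    have := congrArg (Nat.cast : ℕ → ℝ) h
    push_cast [Nat.cast_sub hn] at this
    linear_combination this
  rw [fussCatalan_one]
  field_simp
  linear_combination hcast

end FussCatalan

noncomputable def fussCatalanSeries (m r : ℕ) (x : ℝ) : ℝ := ∑' n, fussCatalan m n r * x ^ n

section Series

variable {m : ℕ} {x t : ℝ}

lemma sum_range_fussCatalan_mul_pow_le (hm : 0 < m) (hx : 0 ≤ x) (ht : 0 ≤ t)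
    (hroot : 1 + x * t ^ m ≤ t) (N : ℕ) {r : ℕ} (hr : r ≠ 0) :
    ∑ n ∈ range N, fussCatalan m n r * x ^ n ≤ t ^ r := by
  induction N generalizing r with
  | zero => simp only [sum_range_zero]; positivity
  | succ N ih =>
    have shifted :
        ∀ r, ∑ n ∈ range N, fussCatalan m (n + 1) r * x ^ (n + 1) ≤ t ^ r - 1 := by
      intro r
      induction r with
      | zero => simp
      | succ r ihr =>
        have hstep : t ^ r + x * t ^ (r + m) ≤ t ^ (r + 1) := by
          rw [pow_add, pow_succ]
          nlinarith [pow_nonneg ht r]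
        have hsplit : ∑ n ∈ range N, fussCatalan m (n + 1) (r + 1) * x ^ (n + 1) =
            ∑ n ∈ range N, fussCatalan m (n + 1) r * x ^ (n + 1) +
              x * ∑ n ∈ range N, fussCatalan m n (r + m) * x ^ n := by
          rw [mul_sum, ← sum_add_distrib]
          exact sum_congr rfl fun n _ => by rw [fussCatalan_succ_succ hm]; ring
        have := mul_le_mul_of_nonneg_left (ih (r := r + m) (by omega)) hx
        linarith
    rw [sum_range_succ', fussCatalan_zero_left m hr]
    linarith [shifted r]

lemma summable_fussCatalan_mul_pow (hm : 0 < m) (hx : 0 ≤ x) (ht : 0 ≤ t)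
    (hroot : 1 + x * t ^ m ≤ t) {r : ℕ} (hr : r ≠ 0) :
    Summable fun n => fussCatalan m n r * x ^ n :=
  summable_of_sum_range_le (fun n => by have := fussCatalan_nonneg m n r; positivity)
    fun N => sum_range_fussCatalan_mul_pow_le hm hx ht hroot N hr

lemma summable_norm_fussCatalan_mul_pow (hm : 0 < m) (hx : 0 ≤ x) (ht : 0 ≤ t)
    (hroot : 1 + x * t ^ m ≤ t) {r : ℕ} (hr : r ≠ 0) :
    Summable fun n => ‖fussCatalan m n r * x ^ n‖ := by
  simpa only [Real.norm_eq_abs] using (summable_fussCatalan_mul_pow hm hx ht hroot hr).abs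

lemma fussCatalanSeries_le (hm : 0 < m) (hx : 0 ≤ x) (ht : 0 ≤ t)
    (hroot : 1 + x * t ^ m ≤ t) {r : ℕ} (hr : r ≠ 0) : fussCatalanSeries m r x ≤ t ^ r :=
  (summable_fussCatalan_mul_pow hm hx ht hroot hr).tsum_le_of_sum_range_le
    fun N => sum_range_fussCatalan_mul_pow_le hm hx ht hroot N hr

lemma fussCatalanSeries_add (hm : 0 < m) (hx : 0 ≤ x) (ht : 0 ≤ t)
    (hroot : 1 + x * t ^ m ≤ t) {r s : ℕ} (hr : r ≠ 0) (hs : s ≠ 0) :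
    fussCatalanSeries m (r + s) x = fussCatalanSeries m r x * fussCatalanSeries m s x := by
  obtain ⟨s, rfl⟩ := Nat.exists_eq_add_one_of_ne_zero hs
  have hconv := fussCatalan_convolution hm (f := fun n s => fussCatalan m n (s + 1))
    (fun s => fussCatalan_zero_left m s.succ_ne_zero)
    (fun n s => by rw [fussCatalan_succ_succ hm, add_right_comm s 1 m]) (r := r)
  unfold fussCatalanSeries
  rw [tsum_mul_tsum_eq_tsum_sum_range_of_summable_norm (summable_norm_fussCatalan_mul_pow hm hx ht
    hroot hr) (summable_norm_fussCatalan_mul_pow hm hx ht hroot hs)]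
  refine tsum_congr fun n => ?_
  rw [← add_assoc, hconv n hr s, sum_mul]
  refine sum_congr rfl fun k hk => ?_
  rw [mul_mul_mul_comm, ← pow_add, Nat.add_sub_cancel' (Nat.le_of_lt_succ (mem_range.mp hk))]

lemma fussCatalanSeries_eq_pow (hm : 0 < m) (hx : 0 ≤ x) (ht : 0 ≤ t)
    (hroot : 1 + x * t ^ m ≤ t) {r : ℕ} (hr : r ≠ 0) :
    fussCatalanSeries m r x = fussCatalanSeries m 1 x ^ r := by
  induction r with
  | zero => exact absurd rfl hr
  | succ r ih =>
    rcases eq_or_ne r 0 with rfl | hr'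
    · simp
    rw [fussCatalanSeries_add hm hx ht hroot hr' one_ne_zero, ih hr', pow_succ]

lemma fussCatalanSeries_one_eq (hm : 0 < m) (hx : 0 ≤ x) (ht : 0 ≤ t)
    (hroot : 1 + x * t ^ m ≤ t) :
    fussCatalanSeries m 1 x = 1 + x * fussCatalanSeries m 1 x ^ m := by
  rw [← fussCatalanSeries_eq_pow hm hx ht hroot hm.ne', fussCatalanSeries, fussCatalanSeries,
    (summable_fussCatalan_mul_pow hm hx ht hroot one_ne_zero).tsum_eq_zero_add,
    fussCatalan_zero_left m one_ne_zero, ← tsum_mul_left]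
  congr 1
  · simp
  refine tsum_congr fun n => ?_
  have hshift := fussCatalan_succ_succ hm n 0
  simp only [zero_add, fussCatalan_zero_right] at hshift
  rw [hshift, pow_succ]
  ring

/-- `(m - 1) t < m` says that `w ↦ 1 + x w^m` has slope `m x t^(m-1) < 1` at its fixed
point `t`. -/
lemma eq_of_le_of_root {w : ℝ} (hx : 0 ≤ x) (hw : 0 ≤ w) (hwt : w ≤ t)
    (hw_root : w = 1 + x * w ^ m) (ht_root : t = 1 + x * t ^ m) (hcrit : (m - 1) * t < m) :
    w = t := by
  have ht : 0 ≤ t := hw.trans hwt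
  have hmvt : t ^ m - w ^ m ≤ (t - w) * m * t ^ (m - 1) := by
    have := abs_pow_sub_pow_le t w m
    rwa [abs_of_nonneg (sub_nonneg.2 (pow_le_pow_left₀ hw hwt m)),
      abs_of_nonneg (sub_nonneg.2 hwt), abs_of_nonneg ht, abs_of_nonneg hw, max_eq_left hwt] at this
  have hpow : (m : ℝ) * t ^ (m - 1) * t = m * t ^ m := by
    rcases eq_or_ne m 0 with rfl | hm
    · simp
    · rw [mul_assoc, pow_sub_one_mul hm]
  have key : (t - w) * t ≤ (t - w) * (m * (t - 1)) :=
    calc (t - w) * t = x * (t ^ m - w ^ m) * t := by linear_combination t * (ht_root - hw_root)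
      _ ≤ x * ((t - w) * m * t ^ (m - 1)) * t := by gcongr
      _ = (t - w) * (m * (t - 1)) := by
        linear_combination (t - w) * x * hpow - (t - w) * m * ht_root
  nlinarith

lemma fussCatalanSeries_one_eq_of_root (hm : 0 < m) (hx : 0 ≤ x) (ht₀ : 0 ≤ t)
    (ht : t = 1 + x * t ^ m) (hcrit : (m - 1) * t < m) : fussCatalanSeries m 1 x = t :=
  eq_of_le_of_root hx
    (tsum_nonneg fun n => mul_nonneg (fussCatalan_nonneg m n 1) (pow_nonneg hx n))
    (by simpa using fussCatalanSeries_le hm hx ht₀ ht.symm.le one_ne_zero)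
    (fussCatalanSeries_one_eq hm hx ht₀ ht.symm.le) ht hcrit

end Series

section ChooseSeries

variable {m : ℕ} {x t : ℝ}

lemma mul_choose_mul_mul_pow (hm : 0 < m) (x : ℝ) (n : ℕ) :
    m * ((m * n).choose n * x ^ n) = fussCatalan m n 1 * x ^ n + (m - 1) *
      ∑ k ∈ range (n + 1),
        fussCatalan m k 1 * x ^ k * ((m * (n - k)).choose (n - k) * x ^ (n - k)) := by
  have hconv := fussCatalan_convolution hm (f := fun n s => ((m * n + s).choose n : ℝ)) (by simp)
    (fun n s => by
      rw [show m * (n + 1) + (s + 1) = m * (n + 1) + s + 1 by ring, Nat.choose_succ_succ',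
        show m * n + (s + m) = m * (n + 1) + s by ring]
      push_cast
      ring) n one_ne_zero 0
  have hone : ((m * n + 1).choose n : ℝ) = (m * n + 1) * fussCatalan m n 1 := by
    rw [fussCatalan_one]; field_simp
  simp only [add_zero] at hconv
  have hsum : ∑ k ∈ range (n + 1),
      fussCatalan m k 1 * x ^ k * ((m * (n - k)).choose (n - k) * x ^ (n - k)) =
        (m * n + 1).choose n * x ^ n := by
    rw [hconv, sum_mul]
    refine sum_congr rfl fun k hk => ?_
    rw [mul_mul_mul_comm, ← pow_add, Nat.add_sub_cancel' (Nat.le_of_lt_succ (mem_range.mp hk))]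
  rw [hsum, hone, cast_choose_mul_eq hm]
  ring

lemma sum_range_choose_mul_mul_pow_le (hm : 0 < m) (hx : 0 ≤ x) (ht₀ : 0 ≤ t)
    (hroot : 1 + x * t ^ m ≤ t) (hcrit : (m - 1) * t < m) (N : ℕ) :
    ∑ n ∈ range N, ((m * n).choose n : ℝ) * x ^ n ≤ t / (m - (m - 1) * t) := by
  set a : ℕ → ℝ := fun n => (m * n).choose n * x ^ n
  set b : ℕ → ℝ := fun n => fussCatalan m n 1 * x ^ n
  have ha : ∀ n, 0 ≤ a n := fun n => by positivity
  have hb₀ : ∀ n, 0 ≤ b n := fun n => mul_nonneg (fussCatalan_nonneg m n 1) (pow_nonneg hx n)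
  have hb : ∀ N, ∑ n ∈ range N, b n ≤ t := fun N => by
    simpa using sum_range_fussCatalan_mul_pow_le hm hx ht₀ hroot N one_ne_zero
  have hconv : ∑ n ∈ range N, ∑ k ∈ range (n + 1), b k * a (n - k) ≤
      t * ∑ n ∈ range N, a n := by
    calc ∑ n ∈ range N, ∑ k ∈ range (n + 1), b k * a (n - k)
        = ∑ k ∈ range N, b k * ∑ j ∈ range (N - k), a j := by
          simp only [sum_range_diag_flip N fun k j => b k * a j, mul_sum]
      _ ≤ ∑ k ∈ range N, b k * ∑ n ∈ range N, a n := by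
          gcongr with k
          · exact hb₀ k
          · exact Nat.sub_le N k
      _ ≤ t * ∑ n ∈ range N, a n := by
          rw [← sum_mul]
          exact mul_le_mul_of_nonneg_right (hb N) (sum_nonneg fun n _ => ha n)
  have hrenewal : (m : ℝ) * ∑ n ∈ range N, a n = ∑ n ∈ range N, b n +
      (m - 1) * ∑ n ∈ range N, ∑ k ∈ range (n + 1), b k * a (n - k) := by
    rw [mul_sum, mul_sum, ← sum_add_distrib]
    exact sum_congr rfl fun n _ => mul_choose_mul_mul_pow hm x n
  have hm₁ : (1 : ℝ) ≤ m := by exact_mod_cast hm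
  rw [le_div_iff₀ (by linarith)]
  nlinarith [hb N]

theorem hasSum_choose_mul_mul_pow (hm : 0 < m) (hx : 0 ≤ x) (ht₀ : 0 ≤ t)
    (ht : t = 1 + x * t ^ m) (hcrit : (m - 1) * t < m) :
    HasSum (fun n => ((m * n).choose n : ℝ) * x ^ n) (t / (m - (m - 1) * t)) := by
  set a : ℕ → ℝ := fun n => (m * n).choose n * x ^ n
  set b : ℕ → ℝ := fun n => fussCatalan m n 1 * x ^ n
  have ha : Summable a := summable_of_sum_range_le (fun n => by positivity)
    (sum_range_choose_mul_mul_pow_le hm hx ht₀ ht.symm.le hcrit)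
  have hb : HasSum b t := by
    rw [← fussCatalanSeries_one_eq_of_root hm hx ht₀ ht hcrit]
    exact (summable_fussCatalan_mul_pow hm hx ht₀ ht.symm.le one_ne_zero).hasSum
  have hconv : HasSum (fun n => ∑ k ∈ range (n + 1), b k * a (n - k)) (t * ∑' n, a n) := by
    rw [← hb.tsum_eq]
    exact hasSum_sum_range_mul_of_summable_norm
      (summable_norm_fussCatalan_mul_pow hm hx ht₀ ht.symm.le one_ne_zero)
      (by simpa only [Real.norm_eq_abs] using ha.abs)
  have hrenewal : HasSum (fun n => (m : ℝ) * a n) (t + (m - 1) * (t * ∑' n, a n)) := by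
    convert hb.add (hconv.mul_left ((m : ℝ) - 1)) using 1
    exact funext (mul_choose_mul_mul_pow hm x)
  have key := (ha.hasSum.mul_left (m : ℝ)).unique hrenewal
  convert ha.hasSum using 1
  rw [div_eq_iff (by linarith)]
  linear_combination -key

end ChooseSeries

/-- If `q ∈ (0,1)`, `m ≥ 2` and `q > (m-1)/m`, then the mean number of leaves
`∑_{Ne} ((m-1) Ne + 1) * P(Ne)`, with
`P(Ne) = q^((m-1)Ne+1) (1-q)^Ne (1/(m Ne+1)) C(m Ne + 1, Ne)`, equals `q / (1 - m(1-q))`. -/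
theorem stmt_5 (m : ℕ) (hm : 2 ≤ m) (q : ℝ) (hq : q ∈ Set.Ioo (0 : ℝ) 1)
    (hsub : ((m : ℝ) - 1) / m < q) :
    ∑' Ne : ℕ, (((m : ℝ) - 1) * Ne + 1) *
        (q ^ ((m - 1) * Ne + 1) * (1 - q) ^ Ne *
          (1 / ((m : ℝ) * Ne + 1)) * (Nat.choose (m * Ne + 1) Ne : ℝ))
      = q / (1 - (m : ℝ) * (1 - q)) := by
  obtain ⟨hq₀, hq₁⟩ := hq
  have hm₀ : 0 < m := by omega
  have hcrit : (m - 1) * q⁻¹ < m := by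
    rw [div_lt_iff₀ (by positivity)] at hsub
    rw [← div_eq_mul_inv, div_lt_iff₀ hq₀]
    linarith
  have hroot : q⁻¹ = 1 + (1 - q) * q ^ (m - 1) * q⁻¹ ^ m := by
    rw [inv_pow, ← pow_sub_one_mul hm₀.ne' q]
    field_simp
    ring
  have hsum := hasSum_choose_mul_mul_pow hm₀
    (mul_nonneg (sub_nonneg.2 hq₁.le) (by positivity)) (by positivity) hroot hcrit
  have hterm : ∀ n : ℕ, (((m : ℝ) - 1) * n + 1) * (q ^ ((m - 1) * n + 1) * (1 - q) ^ n *
      (1 / ((m : ℝ) * n + 1)) * (Nat.choose (m * n + 1) n : ℝ)) =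
      q * ((m * n).choose n * ((1 - q) * q ^ (m - 1)) ^ n) := by
    intro n
    rw [cast_choose_mul_eq hm₀, fussCatalan_one, mul_pow, ← pow_mul, pow_succ]
    ring
  rw [tsum_congr hterm, tsum_mul_left, hsum.tsum_eq]
  rw [show (m : ℝ) - (m - 1) * q⁻¹ = (1 - m * (1 - q)) / q by field_simp; ring]
  field_simp
end

section
/- For a branching process where each node is a leaf with probability q or has m children with probability 1-q, with q \geq (m-1)/m, the total probability \sum_{Ne=0}^{\infty} q^{(m-1)Ne+1}(1-q)^{Ne} \frac{1}{mNe+1}\binom{mNe+1}{Ne} equals 1. -/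
/-!
Write `E p = ∑ₙ R(p, n) q^((m-1)n+p) (1-q)^n` for the probability that a forest of `p`
independent trees of the process is finite, where the Raney number `R(p, n)` counts forests of
`p` trees with `n` splitting events. Splitting off the first tree gives
`E (p+1) = q E p + (1-q) E (p+m)`; on partial sums this already shows `E p ≤ 1`.
Raney's convolution `R(p+s, ·) = R(p, ·) ∗ R(s, ·)` and the Cauchy product make `E`
multiplicative, so `e = E 1` is a fixed point of `t ↦ q + (1-q) t^m` in `[0, 1]`. That map is
strictly convex with slope `m(1-q) ≤ 1` at its fixed point `1`, so it has no other fixed point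
below `1`, and `e = 1`.
-/

open Finset Filter

/-- Forests of `p` rooted `m`-ary trees with `n` internal nodes: the first tree is either a leaf
or a root with `m` subtrees. -/
def raney (m : ℕ) : ℕ → ℕ → ℕ
  | _, 0 => 1
  | 0, _ + 1 => 0
  | p + 1, n + 1 => raney m p (n + 1) + raney m (p + m) n
termination_by p n => (n, p)

section Raney

variable (m : ℕ)

@[simp] theorem raney_zero_right (p : ℕ) : raney m p 0 = 1 := by
  cases p <;> rw [raney]

@[simp] theorem raney_zero_succ (n : ℕ) : raney m 0 (n + 1) = 0 := by
  rw [raney]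

theorem raney_succ_succ (p n : ℕ) :
    raney m (p + 1) (n + 1) = raney m p (n + 1) + raney m (p + m) n := by
  rw [raney]

theorem raney_add (n : ℕ) : ∀ p s,
    raney m (p + s) n = ∑ ij ∈ antidiagonal n, raney m p ij.1 * raney m s ij.2 := by
  induction n with
  | zero => simp
  | succ n ihn =>
    intro p s
    induction p with
    | zero => simp [Nat.sum_antidiagonal_succ]
    | succ p ihp =>
      rw [Nat.sum_antidiagonal_succ]
      simp only [raney_succ_succ, add_mul, sum_add_distrib, ← ihn (p + m)]
      rw [Nat.add_right_comm, raney_succ_succ, ihp, Nat.sum_antidiagonal_succ, raney_zero_right,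
        raney_zero_right, Nat.add_right_comm p m s]
      ring

theorem mul_raney_eq (hm : m ≠ 0) (n : ℕ) : ∀ p,
    (m * n + p) * raney m p n = p * (m * n + p).choose n := by
  induction n with
  | zero => simp
  | succ n ihn =>
    intro p
    induction p with
    | zero => simp
    | succ p ihp =>
      obtain ⟨N, hN⟩ : ∃ N, N = m * (n + 1) + p := ⟨_, rfl⟩
      have hnN : n ≤ N := by rw [hN]; nlinarith [Nat.pos_of_ne_zero hm]
      have h1 : N * raney m p (n + 1) = p * N.choose (n + 1) := hN ▸ ihp
      have h2 : N * raney m (p + m) n = (p + m) * N.choose n := by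
        rw [show N = m * n + (p + m) by rw [hN]; ring]
        exact ihn (p + m)
      have hA := Nat.add_one_mul_choose_eq N n
      have hB := Nat.choose_succ_right_eq N n
      rw [show m * (n + 1) + (p + 1) = N + 1 by omega, raney_succ_succ]
      apply Nat.eq_of_mul_eq_mul_left (show 0 < N * (n + 1) by rw [hN]; positivity)
      zify [hnN] at h1 h2 hA hB hN ⊢
      linear_combination (n + 1) * (N + 1) * (h1 + h2) + (N + 1) * p * hB + N * (p + 1) * hA
        - (N + 1) * N.choose n * hN

theorem raney_one_eq (hm : m ≠ 0) (n : ℕ) :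
    (raney m 1 n : ℝ) = 1 / ((m : ℝ) * n + 1) * (m * n + 1).choose n := by
  have h := mul_raney_eq m hm n 1
  rw [one_mul] at h
  rw [← h]
  push_cast
  field_simp

end Raney

/-- The probability that `p` independent trees of the process have `n` splitting events in
total; such a forest has `(m - 1) * n + p` leaves. -/
noncomputable def forestProb (m : ℕ) (q : ℝ) (p n : ℕ) : ℝ :=
  raney m p n * q ^ ((m - 1) * n + p) * (1 - q) ^ n

section ForestProb

variable {m : ℕ} {q : ℝ}

theorem forestProb_nonneg (hq0 : 0 ≤ q) (hq1 : q ≤ 1) (p n : ℕ) : 0 ≤ forestProb m q p n := by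
  have : 0 ≤ 1 - q := by linarith
  unfold forestProb
  positivity

@[simp] theorem forestProb_zero_right (p : ℕ) : forestProb m q p 0 = q ^ p := by
  simp [forestProb]

@[simp] theorem forestProb_zero_succ (n : ℕ) : forestProb m q 0 (n + 1) = 0 := by
  simp [forestProb]

theorem forestProb_succ_succ (hm : m ≠ 0) (p n : ℕ) :
    forestProb m q (p + 1) (n + 1) =
      q * forestProb m q p (n + 1) + (1 - q) * forestProb m q (p + m) n := by
  obtain ⟨k, rfl⟩ := Nat.exists_eq_add_one_of_ne_zero hm
  simp only [forestProb, raney_succ_succ, Nat.add_sub_cancel]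
  push_cast
  ring

theorem forestProb_add (p s n : ℕ) :
    forestProb m q (p + s) n =
      ∑ ij ∈ antidiagonal n, forestProb m q p ij.1 * forestProb m q s ij.2 := by
  simp only [forestProb, raney_add m n p s, Nat.cast_sum, Nat.cast_mul, sum_mul]
  refine sum_congr rfl fun ⟨i, j⟩ hij => ?_
  obtain rfl : i + j = n := HasAntidiagonal.mem_antidiagonal.mp hij
  ring

theorem sum_range_forestProb_succ (hm : m ≠ 0) (p N : ℕ) :
    ∑ n ∈ range (N + 1), forestProb m q (p + 1) n =
      q * ∑ n ∈ range (N + 1), forestProb m q p n +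
        (1 - q) * ∑ n ∈ range N, forestProb m q (p + m) n := by
  simp only [sum_range_succ' _ N, forestProb_succ_succ hm, sum_add_distrib, ← mul_sum,
    forestProb_zero_right]
  ring

theorem sum_range_forestProb_le_one (hm : m ≠ 0) (hq0 : 0 ≤ q) (hq1 : q ≤ 1) (N : ℕ) :
    ∀ p, ∑ n ∈ range N, forestProb m q p n ≤ 1 := by
  induction N with
  | zero => simp
  | succ N ihN =>
    intro p
    induction p with
    | zero => simp [sum_range_succ']
    | succ p ihp =>
      rw [sum_range_forestProb_succ hm]
      nlinarith [ihN (p + m)]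

theorem summable_forestProb (hm : m ≠ 0) (hq0 : 0 ≤ q) (hq1 : q ≤ 1) (p : ℕ) :
    Summable (forestProb m q p) :=
  summable_of_sum_range_le (forestProb_nonneg hq0 hq1 p)
    (sum_range_forestProb_le_one hm hq0 hq1 · p)

theorem tsum_forestProb_le_one (hm : m ≠ 0) (hq0 : 0 ≤ q) (hq1 : q ≤ 1) (p : ℕ) :
    ∑' n, forestProb m q p n ≤ 1 :=
  Real.tsum_le_of_sum_range_le (forestProb_nonneg hq0 hq1 p)
    (sum_range_forestProb_le_one hm hq0 hq1 · p)

theorem tsum_forestProb_zero : ∑' n, forestProb m q 0 n = 1 := by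
  rw [tsum_eq_single 0 fun n hn => ?_, forestProb_zero_right, pow_zero]
  obtain ⟨k, rfl⟩ := Nat.exists_eq_add_one_of_ne_zero hn
  exact forestProb_zero_succ k

theorem tsum_forestProb_add (hm : m ≠ 0) (hq0 : 0 ≤ q) (hq1 : q ≤ 1) (p s : ℕ) :
    ∑' n, forestProb m q (p + s) n = (∑' n, forestProb m q p n) * ∑' n, forestProb m q s n := by
  have hnorm (r : ℕ) : Summable fun n => ‖forestProb m q r n‖ :=
    (summable_forestProb hm hq0 hq1 r).congr fun n =>
      (Real.norm_of_nonneg (forestProb_nonneg hq0 hq1 r n)).symm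
  simp only [tsum_mul_tsum_eq_tsum_sum_antidiagonal_of_summable_norm (hnorm p) (hnorm s),
    forestProb_add]

theorem tsum_forestProb_eq_pow (hm : m ≠ 0) (hq0 : 0 ≤ q) (hq1 : q ≤ 1) (p : ℕ) :
    ∑' n, forestProb m q p n = (∑' n, forestProb m q 1 n) ^ p := by
  induction p with
  | zero => exact tsum_forestProb_zero
  | succ p ih => rw [tsum_forestProb_add hm hq0 hq1, ih, pow_succ]

theorem tsum_forestProb_succ (hm : m ≠ 0) (hq0 : 0 ≤ q) (hq1 : q ≤ 1) (p : ℕ) :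
    ∑' n, forestProb m q (p + 1) n =
      q * ∑' n, forestProb m q p n + (1 - q) * ∑' n, forestProb m q (p + m) n := by
  have h (r : ℕ) := (summable_forestProb hm hq0 hq1 r).hasSum.tendsto_sum_nat
  refine tendsto_nhds_unique ((tendsto_add_atTop_iff_nat 1).2 (h (p + 1))) ?_
  simp only [sum_range_forestProb_succ hm]
  exact (((tendsto_add_atTop_iff_nat 1).2 (h p)).const_mul q).add ((h (p + m)).const_mul (1 - q))

end ForestProb

theorem eq_one_of_eq_add_mul_pow {m : ℕ} {q e : ℝ} (hm : 2 ≤ m) (hmq : m * (1 - q) ≤ 1)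
    (he0 : 0 ≤ e) (he1 : e ≤ 1) (he : e = q + (1 - q) * e ^ m) : e = 1 := by
  by_contra hne
  have hlt : e < 1 := lt_of_le_of_ne he1 hne
  have hbernoulli : 1 + m * (e - 1) < e ^ m := by
    have := one_add_mul_self_lt_rpow_one_add (s := e - 1) (p := m) (by linarith)
      (sub_ne_zero.mpr hne) (by exact_mod_cast hm)
    simpa [Real.rpow_natCast] using this
  have hem : e ^ m ≤ 1 := pow_le_one₀ he0 he1
  rcases lt_or_ge q 1 with hq | hq
  · nlinarith
  · nlinarith

/-- For the branching process with leaf probability `q ≥ (m-1)/m`, the total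
probability `∑_{Ne} q^((m-1)Ne+1) (1-q)^Ne (1/(m Ne + 1)) C(m Ne + 1, Ne)` equals 1. -/
theorem stmt_7 (m : ℕ) (hm : 2 ≤ m) (q : ℝ)
    (hq : ((m : ℝ) - 1) / m ≤ q) (hq1 : q ≤ 1) :
    ∑' Ne : ℕ, q ^ ((m - 1) * Ne + 1) * (1 - q) ^ Ne *
        (1 / ((m : ℝ) * Ne + 1)) * (Nat.choose (m * Ne + 1) Ne : ℝ) = 1 := by
  have hm0 : m ≠ 0 := by omega
  have hm1 : (1 : ℝ) ≤ m := by exact_mod_cast hm.trans' one_le_two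
  have hq0 : 0 ≤ q := (div_nonneg (by linarith) (by linarith)).trans hq
  have hmq : m * (1 - q) ≤ 1 := by
    rw [div_le_iff₀ (by linarith)] at hq
    linarith
  have hterm (Ne : ℕ) : q ^ ((m - 1) * Ne + 1) * (1 - q) ^ Ne *
      (1 / ((m : ℝ) * Ne + 1)) * (Nat.choose (m * Ne + 1) Ne : ℝ) = forestProb m q 1 Ne := by
    rw [forestProb, raney_one_eq m hm0]
    ring
  simp_rw [hterm]
  refine eq_one_of_eq_add_mul_pow hm hmq (tsum_nonneg (forestProb_nonneg hq0 hq1 1))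
    (tsum_forestProb_le_one hm0 hq0 hq1 1) ?_
  have h := tsum_forestProb_succ hm0 hq0 hq1 0
  rwa [tsum_forestProb_zero, zero_add m, tsum_forestProb_eq_pow hm0 hq0 hq1 m, mul_one] at h
end
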